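/- arXiv:1412.0270 — 4 statements merged into one kernel-verified Lean document; each statement's English description precedes it below -/
import Mathlib

section
/- Let v ∈ H^s(ℝⁿ) and for each k ∈ ℕ let θ_k : ℝ → [0,1] be Lipschitz with constant C/k, supported in [-2k, 2k], and equal to 1 on [-k, k]. Then v_k := θ_k(v) · v belongs to H^s(ℝⁿ) ∩ L^∞(ℝⁿ), satisfies -v⁻ ≤ v_k ≤ v⁺ a.e., |v_k| ≤ |v| a.e., and v_k → v strongly in H^s(ℝⁿ). -/
/-!
The map `a ↦ θ_k(a) a` is `(1 + 2C)`-Lipschitz for every `k`: where `|a| ≤ 2k` the Lipschitz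
constant `C/k` of `θ_k` is compensated by the size of `a`, and where `|a| > 2k` the map vanishes.
Composing with a Lipschitz map fixing `0` preserves `L²` and multiplies the Gagliardo seminorm by
at most the square of the constant, so `v_k ∈ H^s`. The differences `θ_k(v) v - v` vanish
pointwise once `k ≥ |v|`, and they are dominated by `|v|` and, inside the Gagliardo integral, by
`(2 + 2C)²` times the integrand of `v`; dominated convergence gives `v_k → v` in `L²` and in the
Gagliardo seminorm.
-/

open MeasureTheory
open scoped ENNReal

/-- Gagliardo seminorm (squared) of a function on `ℝⁿ`. -/
noncomputable def gagliardo (n : ℕ) (s : ℝ) (u : (Fin n → ℝ) → ℝ) : ℝ≥0∞ :=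
  ∫⁻ p : (Fin n → ℝ) × (Fin n → ℝ),
    ENNReal.ofReal ((u p.1 - u p.2) ^ 2 / ‖p.1 - p.2‖ ^ (n + 2 * s))

/-- Membership in the fractional Sobolev space `H^s(ℝⁿ)`. -/
def MemHs (n : ℕ) (s : ℝ) (u : (Fin n → ℝ) → ℝ) : Prop :=
  MemLp u 2 volume ∧ gagliardo n s u < ⊤

open Filter Topology Set
open scoped NNReal

lemma mul_mem_uIcc_of_mem_Icc {t : ℝ} (ht : t ∈ Icc 0 1) (a : ℝ) : t * a ∈ uIcc a 0 := by
  rcases le_total 0 a with ha | ha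
  · rw [uIcc_of_ge ha]
    exact ⟨mul_nonneg ht.1 ha, mul_le_of_le_one_left ha ht.2⟩
  · rw [uIcc_of_le ha]
    exact ⟨le_mul_of_le_one_left ha ht.2, mul_nonpos_of_nonneg_of_nonpos ht.1 ha⟩

section Cutoff

variable {θ : ℝ → ℝ} {R : ℝ≥0}

lemma abs_mul_id_le_of_vanishing (h1 : ∀ x, |θ x| ≤ 1) (h0 : ∀ x, (R : ℝ) < |x| → θ x = 0)
    (x : ℝ) : |θ x * x| ≤ R := by
  rcases le_or_gt |x| R with hx | hx
  · rw [abs_mul]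
    exact (mul_le_of_le_one_left (abs_nonneg x) (h1 x)).trans hx
  · simp [h0 x hx]

theorem LipschitzWith.mul_id_of_vanishing {L : ℝ≥0} (hθ : LipschitzWith L θ)
    (h1 : ∀ x, |θ x| ≤ 1) (h0 : ∀ x, (R : ℝ) < |x| → θ x = 0) :
    LipschitzWith (1 + L * R) fun x => θ x * x := by
  have near : ∀ a b : ℝ, |b| ≤ R → |θ a * a - θ b * b| ≤ (1 + L * R) * |a - b| := by
    intro a b hb
    have hθab : |θ a - θ b| ≤ L * |a - b| := by simpa [Real.dist_eq] using hθ.dist_le_mul a b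
    calc |θ a * a - θ b * b| = |θ a * (a - b) + (θ a - θ b) * b| := by ring_nf
      _ ≤ |θ a| * |a - b| + |θ a - θ b| * |b| := by
          rw [← abs_mul, ← abs_mul]; exact abs_add_le _ _
      _ ≤ 1 * |a - b| + L * |a - b| * R := by gcongr; exact h1 a
      _ = (1 + L * R) * |a - b| := by ring
  refine LipschitzWith.of_dist_le_mul fun a b => ?_
  simp only [Real.dist_eq, NNReal.coe_add, NNReal.coe_one, NNReal.coe_mul]
  rcases le_or_gt |b| R with hb | hb
  · exact near a b hb
  rcases le_or_gt |a| R with ha | ha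
  · rw [abs_sub_comm, abs_sub_comm a]
    exact near b a ha
  · simp only [h0 a ha, h0 b hb, zero_mul, sub_zero, abs_zero]
    positivity

end Cutoff

theorem tendsto_eLpNorm_zero_of_dominated {α E G ι : Type*} [MeasurableSpace α] {μ : Measure α}
    [NormedAddCommGroup E] [NormedAddCommGroup G] {p : ℝ≥0∞} (hp : p ≠ ∞) {l : Filter ι}
    [l.IsCountablyGenerated] {F : ι → α → E} {g : α → G}
    (hF : ∀ i, AEStronglyMeasurable (F i) μ) (hg : MemLp g p μ)
    (hbound : ∀ i, ∀ᵐ x ∂μ, ‖F i x‖ ≤ ‖g x‖) (hlim : ∀ᵐ x ∂μ, Tendsto (F · x) l (𝓝 0)) :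
    Tendsto (fun i => eLpNorm (F i) p μ) l (𝓝 0) := by
  rcases eq_or_ne p 0 with rfl | hp0
  · simpa using tendsto_const_nhds
  have hpos : 0 < p.toReal := ENNReal.toReal_pos hp0 hp
  have hpow : ∀ r : ℝ, 0 < r → Tendsto (fun t : ℝ≥0∞ => t ^ r) (𝓝 0) (𝓝 0) := fun r hr => by
    simpa [ENNReal.zero_rpow_of_pos hr] using
      (ENNReal.continuous_rpow_const (y := r)).tendsto 0
  suffices Tendsto (fun i => ∫⁻ x, ‖F i x‖ₑ ^ p.toReal ∂μ) l (𝓝 0) by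
    simp only [eLpNorm_eq_lintegral_rpow_enorm_toReal hp0 hp, one_div]
    exact (hpow _ (inv_pos.mpr hpos)).comp this
  have hlim' : ∀ᵐ x ∂μ, Tendsto (fun i => ‖F i x‖ₑ ^ p.toReal) l (𝓝 0) := hlim.mono fun x hx =>
    (hpow _ hpos).comp (by simpa using hx.enorm)
  simpa using tendsto_lintegral_filter_of_dominated_convergence' (fun x => ‖g x‖ₑ ^ p.toReal)
    (.of_forall fun i => ((hF i).enorm.pow_const _))
    (.of_forall fun i => (hbound i).mono fun x hx =>
      ENNReal.rpow_le_rpow (enorm_le_iff_norm_le.mpr hx) hpos.le)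
    (lintegral_rpow_enorm_lt_top_of_eLpNorm_lt_top hp0 hp hg.2).ne hlim'

section Gagliardo

variable {n : ℕ} {s : ℝ}

lemma ofReal_sq_sub_div_le_of_lipschitzWith {f : ℝ → ℝ} {K : ℝ≥0} (hf : LipschitzWith K f)
    (a b : ℝ) {d : ℝ} (hd : 0 ≤ d) :
    ENNReal.ofReal ((f a - f b) ^ 2 / d) ≤ K ^ 2 * ENNReal.ofReal ((a - b) ^ 2 / d) := by
  have hfab : |f a - f b| ≤ K * |a - b| := by simpa [Real.dist_eq] using hf.dist_le_mul a b
  have hsq : (f a - f b) ^ 2 ≤ K ^ 2 * (a - b) ^ 2 := by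
    rw [← sq_abs, ← sq_abs (a - b), ← mul_pow]
    exact pow_le_pow_left₀ (abs_nonneg _) hfab 2
  rw [← ENNReal.ofReal_coe_nnreal, ← ENNReal.ofReal_pow K.coe_nonneg,
    ← ENNReal.ofReal_mul (by positivity), mul_div_assoc']
  exact ENNReal.ofReal_le_ofReal (div_le_div_of_nonneg_right hsq hd)

theorem gagliardo_comp_le {f : ℝ → ℝ} {K : ℝ≥0} (hf : LipschitzWith K f)
    (u : (Fin n → ℝ) → ℝ) : gagliardo n s (fun x => f (u x)) ≤ K ^ 2 * gagliardo n s u := by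
  rw [gagliardo, gagliardo, ← lintegral_const_mul' _ _ (by simp)]
  exact lintegral_mono fun p => ofReal_sq_sub_div_le_of_lipschitzWith hf _ _ (by positivity)

theorem MemHs.comp_lipschitzWith {u : (Fin n → ℝ) → ℝ} (hu : MemHs n s u) {f : ℝ → ℝ}
    {K : ℝ≥0} (hf : LipschitzWith K f) (hf0 : f 0 = 0) : MemHs n s (fun x => f (u x)) :=
  ⟨hf.comp_memLp hf0 hu.1,
    (gagliardo_comp_le hf u).trans_lt (ENNReal.mul_lt_top (by simp) hu.2)⟩

theorem tendsto_gagliardo_comp_zero {ι : Type*} {l : Filter ι} [l.IsCountablyGenerated]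
    {u : (Fin n → ℝ) → ℝ} (hu : Measurable u) (hgu : gagliardo n s u ≠ ⊤)
    {f : ι → ℝ → ℝ} {K : ℝ≥0} (hf : ∀ i, LipschitzWith K (f i))
    (hlim : ∀ a, Tendsto (f · a) l (𝓝 0)) :
    Tendsto (fun i => gagliardo n s (fun x => f i (u x))) l (𝓝 0) := by
  set d : (Fin n → ℝ) × (Fin n → ℝ) → ℝ := fun p => ‖p.1 - p.2‖ ^ (n + 2 * s)
  have hmeas : ∀ i, Measurable fun p => ENNReal.ofReal ((f i (u p.1) - f i (u p.2)) ^ 2 / d p) :=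
    fun i => by have := (hf i).continuous.measurable; fun_prop
  have hfin : ∫⁻ p, K ^ 2 * ENNReal.ofReal ((u p.1 - u p.2) ^ 2 / d p) ≠ ⊤ := by
    rw [lintegral_const_mul' _ _ (by simp)]
    exact ENNReal.mul_ne_top (by simp) hgu
  have hpt : ∀ p, Tendsto (fun i => ENNReal.ofReal ((f i (u p.1) - f i (u p.2)) ^ 2 / d p)) l
      (𝓝 0) := fun p => by
    simpa using ENNReal.tendsto_ofReal
      ((((hlim (u p.1)).sub (hlim (u p.2))).pow 2).div_const (d p))
  have := tendsto_lintegral_filter_of_dominated_convergence _ (.of_forall hmeas)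
    (.of_forall fun i => .of_forall fun p =>
      ofReal_sq_sub_div_le_of_lipschitzWith (hf i) _ _ (by positivity)) hfin (.of_forall hpt)
  rwa [lintegral_zero] at this

end Gagliardo

theorem stmt_7_general (n : ℕ) (s : ℝ)
    (v : (Fin n → ℝ) → ℝ) (hv : MemHs n s v) (hvmeas : Measurable v)
    (θ : ℕ → ℝ → ℝ) (C : ℝ)
    (hθ01 : ∀ (k : ℕ) (x : ℝ), θ k x ∈ Set.Icc (0 : ℝ) 1)
    (hθlip : ∀ (k : ℕ) (x y : ℝ), |θ k x - θ k y| ≤ C / ((k : ℝ) + 1) * |x - y|)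
    (hθsupp : ∀ (k : ℕ) (x : ℝ), 2 * ((k : ℝ) + 1) < |x| → θ k x = 0)
    (hθone : ∀ (k : ℕ) (x : ℝ), |x| ≤ (k : ℝ) + 1 → θ k x = 1) :
    (∀ k, MemHs n s (fun x => θ k (v x) * v x)) ∧
    (∀ k, ∃ M : ℝ, ∀ᵐ x : Fin n → ℝ, |θ k (v x) * v x| ≤ M) ∧
    (∀ k, ∀ᵐ x : Fin n → ℝ,
      min (v x) 0 ≤ θ k (v x) * v x ∧ θ k (v x) * v x ≤ max (v x) 0 ∧
      |θ k (v x) * v x| ≤ |v x|) ∧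
    Filter.Tendsto (fun k => eLpNorm (fun x => θ k (v x) * v x - v x) 2 volume)
      Filter.atTop (nhds 0) ∧
    Filter.Tendsto (fun k => gagliardo n s (fun x => θ k (v x) * v x - v x))
      Filter.atTop (nhds 0) := by
  have hθ1 : ∀ k x, |θ k x| ≤ 1 := fun k x =>
    abs_le.mpr ⟨by linarith [(hθ01 k x).1], (hθ01 k x).2⟩
  have hvanish : ∀ (k : ℕ) x, ((2 * ((k : ℝ) + 1)).toNNReal : ℝ) < |x| → θ k x = 0 :=
    fun k x hx => hθsupp k x (by rwa [Real.coe_toNNReal _ (by positivity)] at hx)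
  have hcut : ∀ k, LipschitzWith (1 + (2 * C).toNNReal) fun a => θ k a * a := by
    intro k
    have hθk : LipschitzWith (C / ((k : ℝ) + 1)).toNNReal (θ k) :=
      .of_dist_le' fun x y => by simpa only [Real.dist_eq] using hθlip k x y
    convert hθk.mul_id_of_vanishing (hθ1 k) (hvanish k) using 2
    rw [mul_comm (Real.toNNReal _), ← Real.toNNReal_mul (by positivity)]
    field_simp
  have hlim : ∀ a, Tendsto (fun k => θ k a * a - a) atTop (𝓝 0) := fun a =>
    tendsto_const_nhds.congr' <| (eventually_ge_atTop ⌈|a|⌉₊).mono fun k hk => by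
      simp [hθone k a (by linarith [Nat.ceil_le.mp hk])]
  have hmem : ∀ k x, θ k (v x) * v x ∈ uIcc (v x) 0 := fun k x =>
    mul_mem_uIcc_of_mem_Icc (hθ01 k (v x)) (v x)
  refine ⟨fun k => hv.comp_lipschitzWith (hcut k) (by simp),
    fun k => ⟨_, .of_forall fun x => abs_mul_id_le_of_vanishing (hθ1 k) (hvanish k) (v x)⟩,
    fun k => .of_forall fun x => ⟨(hmem k x).1, (hmem k x).2, ?_⟩, ?_, ?_⟩
  · simpa using abs_sub_right_of_mem_uIcc (hmem k x)
  · refine tendsto_eLpNorm_zero_of_dominated (by simp)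
      (fun k => ((hcut k).sub LipschitzWith.id).continuous.comp_aestronglyMeasurable hv.1.1)
      hv.1 (fun k => .of_forall fun x => ?_) (.of_forall fun x => hlim (v x))
    simpa using abs_sub_left_of_mem_uIcc (hmem k x)
  · exact tendsto_gagliardo_comp_zero (f := fun k a => θ k a * a - a) hvmeas hv.2.ne
      (fun k => (hcut k).sub LipschitzWith.id) hlim

theorem stmt_7 (n : ℕ) (s : ℝ) (hs : s ∈ Set.Ioo (0 : ℝ) 1)
    (v : (Fin n → ℝ) → ℝ) (hv : MemHs n s v) (hvmeas : Measurable v)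
    (θ : ℕ → ℝ → ℝ) (C : ℝ) (hC : 0 < C)
    (hθ01 : ∀ (k : ℕ) (x : ℝ), θ k x ∈ Set.Icc (0 : ℝ) 1)
    (hθlip : ∀ (k : ℕ) (x y : ℝ), |θ k x - θ k y| ≤ C / ((k : ℝ) + 1) * |x - y|)
    (hθsupp : ∀ (k : ℕ) (x : ℝ), 2 * ((k : ℝ) + 1) < |x| → θ k x = 0)
    (hθone : ∀ (k : ℕ) (x : ℝ), |x| ≤ (k : ℝ) + 1 → θ k x = 1) :
    (∀ k, MemHs n s (fun x => θ k (v x) * v x)) ∧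
    (∀ k, ∃ M : ℝ, ∀ᵐ x : Fin n → ℝ, |θ k (v x) * v x| ≤ M) ∧
    (∀ k, ∀ᵐ x : Fin n → ℝ,
      min (v x) 0 ≤ θ k (v x) * v x ∧ θ k (v x) * v x ≤ max (v x) 0 ∧
      |θ k (v x) * v x| ≤ |v x|) ∧
    Filter.Tendsto (fun k => eLpNorm (fun x => θ k (v x) * v x - v x) 2 volume)
      Filter.atTop (nhds 0) ∧
    Filter.Tendsto (fun k => gagliardo n s (fun x => θ k (v x) * v x - v x))
      Filter.atTop (nhds 0) :=
  stmt_7_general n s v hv hvmeas θ C hθ01 hθlip hθsupp hθone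
end

section
/- Let V be a finite-dimensional subspace of H^s_rad(ℝⁿ) and ω ∈ ℝ. Then J(u) = ½‖(-Δ)^{s/2}u‖₂² + (ω+1)/2‖u‖₂² - ½∫u² log u² → -∞ as ‖u‖_{H^s} → ∞ with u ∈ V. In particular there exists R > 0 such that J(u) ≤ 0 for all u ∈ V with ‖u‖_{H^s} ≥ R. -/
open MeasureTheory
open scoped ENNReal

/-- The squared `H^s` norm. -/
noncomputable def hsNormSq (n : ℕ) (s : ℝ) (u : (Fin n → ℝ) → ℝ) : ℝ :=
  (∫ x, (u x) ^ 2) + (gagliardo n s u).toReal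

/-- The logarithmic energy functional (the Gagliardo seminorm squared playing
the role of `‖(-Δ)^{s/2}u‖₂²`). -/
noncomputable def Jfun (n : ℕ) (s ω : ℝ) (u : (Fin n → ℝ) → ℝ) : ℝ :=
  (1 / 2) * (gagliardo n s u).toReal + (ω + 1) / 2 * (∫ x, (u x) ^ 2) -
    (1 / 2) * ∫ x, (u x) ^ 2 * Real.log ((u x) ^ 2)

/-!
Since `V` is finite-dimensional (and `‖·‖₂` only a seminorm on it), every `u ∈ V` agrees a.e.
with a combination `∑ bⱼ eⱼ` of finitely many fixed elements of `V`, with coefficients bounded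
by a multiple of `‖u‖₂`. By Cauchy–Schwarz this bounds the Gagliardo seminorm by `K ‖u‖₂²`,
and, through a monotone subadditive majorant of `-y log y`, bounds `-∫ w² log w²` on the unit
sphere of `V`. Writing `u = μ w` with `μ = ‖u‖₂`, the identity
`∫ u² log u² = μ² log μ² + μ² ∫ w² log w²` gives `J(u) ≤ (μ²/2)(C - log μ²)`, while
`‖u‖²_{H^s} ≤ (1 + K) μ²`.
-/

open Real Finset

/-- Unlike `negMulLog`, this majorant is monotone and `y ↦ negMulLogMajorant y / y` is
antitone, which makes it subadditive and sublinear. -/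
noncomputable def negMulLogMajorant (y : ℝ) : ℝ := y * max (1 - log y) 1

lemma antitoneOn_max_one_sub_log_one : AntitoneOn (fun y => max (1 - log y) 1) (Set.Ioi 0) :=
  fun _ hx _ _ hxy => max_le_max (by linarith [log_le_log hx hxy]) le_rfl

lemma negMulLog_le_negMulLogMajorant {y : ℝ} (hy : 0 ≤ y) :
    negMulLog y ≤ negMulLogMajorant y :=
  calc negMulLog y ≤ y * (1 - log y) := by rw [negMulLog]; nlinarith
    _ ≤ negMulLogMajorant y := mul_le_mul_of_nonneg_left (le_max_left _ _) hy

lemma negMulLogMajorant_monotoneOn : MonotoneOn negMulLogMajorant (Set.Ici 0) := by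
  intro x hx y hy hxy
  rcases (Set.mem_Ici.1 hx).eq_or_lt with rfl | hx0
  · simpa [negMulLogMajorant] using
      mul_nonneg (Set.mem_Ici.1 hy) (zero_le_one.trans (le_max_right (1 - log y) 1))
  have hy0 : 0 < y := hx0.trans_le hxy
  have hgibbs : x * log y - x * log x ≤ y - x := by
    have h := mul_le_mul_of_nonneg_left (log_le_sub_one_of_pos (div_pos hy0 hx0)) hx0.le
    rwa [log_div hy0.ne' hx0.ne', mul_sub, mul_sub, mul_div_cancel₀ _ hx0.ne', mul_one] at h
  simp only [negMulLogMajorant, mul_max_of_nonneg _ _ hx0.le, mul_max_of_nonneg _ _ hy0.le]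
  refine max_le ?_ (by simpa using le_max_of_le_right hxy)
  rcases le_total (log y) 0 with hly | hly
  · exact le_max_of_le_left (by nlinarith)
  · exact le_max_of_le_right (by nlinarith)

lemma negMulLogMajorant_mul_le {c y : ℝ} (hc : 1 ≤ c) (hy : 0 ≤ y) :
    negMulLogMajorant (c * y) ≤ c * negMulLogMajorant y := by
  rcases hy.eq_or_lt with rfl | hy0
  · simp [negMulLogMajorant]
  rw [negMulLogMajorant, negMulLogMajorant, mul_assoc]
  refine mul_le_mul_of_nonneg_left (mul_le_mul_of_nonneg_left ?_ hy) (by linarith)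
  exact antitoneOn_max_one_sub_log_one hy0 (mul_pos (by linarith) hy0) (le_mul_of_one_le_left hy hc)

lemma negMulLogMajorant_sum_le {ι : Type*} (t : Finset ι) {x : ι → ℝ}
    (hx : ∀ i ∈ t, 0 ≤ x i) :
    negMulLogMajorant (∑ i ∈ t, x i) ≤ ∑ i ∈ t, negMulLogMajorant (x i) := by
  rw [negMulLogMajorant, sum_mul]
  refine sum_le_sum fun i hi => ?_
  rcases (hx i hi).eq_or_lt with h | h
  · simp [← h, negMulLogMajorant]
  exact mul_le_mul_of_nonneg_left (antitoneOn_max_one_sub_log_one h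
    (h.trans_le (single_le_sum hx hi)) (single_le_sum hx hi)) h.le

lemma integrable_negMulLogMajorant_comp {α : Type*} [MeasurableSpace α] {μ : Measure α}
    {f : α → ℝ} (hf0 : ∀ x, 0 ≤ f x) (hf : Integrable f μ)
    (hflog : Integrable (fun x => f x * log (f x)) μ) :
    Integrable (fun x => negMulLogMajorant (f x)) μ := by
  have h : (fun x => negMulLogMajorant (f x)) = fun x => max (f x - f x * log (f x)) (f x) := by
    ext x
    simp [negMulLogMajorant, mul_max_of_nonneg _ _ (hf0 x), mul_sub]
  rw [h]
  exact (hf.sub hflog).sup hf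

lemma sq_sum_mul_le {ι : Type*} [Fintype ι] {b : ι → ℝ} {B : ℝ} (hb : ∀ i, |b i| ≤ B)
    (d : ι → ℝ) : (∑ i, b i * d i) ^ 2 ≤ (Fintype.card ι * B ^ 2) * ∑ i, d i ^ 2 := by
  have hb2 : ∑ i, b i ^ 2 ≤ Fintype.card ι * B ^ 2 := by
    simpa using sum_le_card_nsmul univ (fun i => b i ^ 2) (B ^ 2) fun i _ => by
      simpa using pow_le_pow_left₀ (abs_nonneg _) (hb i) 2
  calc (∑ i, b i * d i) ^ 2 ≤ (∑ i, b i ^ 2) * ∑ i, d i ^ 2 := sum_mul_sq_le_sq_mul_sq _ _ _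
    _ ≤ (Fintype.card ι * B ^ 2) * ∑ i, d i ^ 2 := by gcongr

lemma negMulLog_sq_sum_mul_le {ι : Type*} [Fintype ι] {b : ι → ℝ} {B : ℝ}
    (hb : ∀ i, |b i| ≤ B) (d : ι → ℝ) :
    negMulLog ((∑ i, b i * d i) ^ 2) ≤
      (Fintype.card ι * B ^ 2 + 1) * ∑ i, negMulLogMajorant (d i ^ 2) := by
  set A : ℝ := Fintype.card ι * B ^ 2 + 1
  have hA : 1 ≤ A := by simp only [A]; nlinarith [sq_nonneg B]
  have hS : 0 ≤ ∑ i, d i ^ 2 := by positivity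
  calc negMulLog ((∑ i, b i * d i) ^ 2)
      ≤ negMulLogMajorant ((∑ i, b i * d i) ^ 2) := negMulLog_le_negMulLogMajorant (sq_nonneg _)
    _ ≤ negMulLogMajorant (A * ∑ i, d i ^ 2) :=
        negMulLogMajorant_monotoneOn (Set.mem_Ici.2 (sq_nonneg _))
          (Set.mem_Ici.2 (by positivity)) <|
          (sq_sum_mul_le hb d).trans (by gcongr; linarith)
    _ ≤ A * negMulLogMajorant (∑ i, d i ^ 2) := negMulLogMajorant_mul_le hA hS
    _ ≤ A * ∑ i, negMulLogMajorant (d i ^ 2) := by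
        gcongr
        exact negMulLogMajorant_sum_le _ fun i _ => sq_nonneg _

lemma integral_negMulLog_const_mul {α : Type*} [MeasurableSpace α] {μ : Measure α}
    {f : α → ℝ} (hf : Integrable f μ) (hflog : Integrable (fun x => negMulLog (f x)) μ) (c : ℝ) :
    ∫ x, negMulLog (c * f x) ∂μ = negMulLog c * ∫ x, f x ∂μ + c * ∫ x, negMulLog (f x) ∂μ := by
  simp_rw [negMulLog_mul]
  rw [integral_add (hf.mul_const _) (hflog.const_mul _), integral_mul_const, integral_const_mul,
    mul_comm]

lemma gagliardo_congr_ae {n : ℕ} {s : ℝ} {u v : (Fin n → ℝ) → ℝ} (h : u =ᵐ[volume] v) :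
    gagliardo n s u = gagliardo n s v := by
  refine lintegral_congr_ae ?_
  rw [Measure.volume_eq_prod]
  filter_upwards [Measure.quasiMeasurePreserving_fst.ae h,
    Measure.quasiMeasurePreserving_snd.ae h] with p h₁ h₂
  rw [h₁, h₂]

lemma gagliardo_sum_smul_le {n : ℕ} {s : ℝ} {ι : Type*} [Fintype ι]
    {e : ι → (Fin n → ℝ) → ℝ} (he : ∀ i, AEMeasurable (e i)) {b : ι → ℝ} {B : ℝ}
    (hb : ∀ i, |b i| ≤ B) :
    gagliardo n s (∑ i, b i • e i) ≤
      ENNReal.ofReal (Fintype.card ι * B ^ 2) * ∑ i, gagliardo n s (e i) := by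
  have hmeas : ∀ i, AEMeasurable (fun p : (Fin n → ℝ) × (Fin n → ℝ) =>
      ENNReal.ofReal ((e i p.1 - e i p.2) ^ 2 / ‖p.1 - p.2‖ ^ (n + 2 * s))) := by
    intro i
    rw [Measure.volume_eq_prod]
    refine ((((he i).comp_fst.sub (he i).comp_snd).pow_const 2).div ?_).ennreal_ofReal
    exact ((continuous_fst.sub continuous_snd).norm.measurable.pow_const _).aemeasurable
  unfold gagliardo
  rw [← lintegral_finsetSum' _ fun i _ => hmeas i, ← lintegral_const_mul' _ _ ENNReal.ofReal_ne_top]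
  refine lintegral_mono fun p => ?_
  rw [← ENNReal.ofReal_sum_of_nonneg fun i _ => by positivity, ← ENNReal.ofReal_mul (by positivity)]
  refine ENNReal.ofReal_le_ofReal ?_
  simp only [Finset.sum_apply, Pi.smul_apply, smul_eq_mul, ← sum_sub_distrib, ← mul_sub,
    ← sum_div, mul_div_assoc']
  gcongr
  exact sq_sum_mul_le hb _

theorem LinearMap.exists_bounded_coeffs {V E : Type*} [AddCommGroup V] [Module ℝ V]
    [FiniteDimensional ℝ V] [NormedAddCommGroup E] [NormedSpace ℝ E] (T : V →ₗ[ℝ] E) :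
    ∃ (k : ℕ) (v : Fin k → V) (B : ℝ), ∀ x : V, ∃ b : Fin k → ℝ,
      (∀ j, |b j| ≤ B * ‖T x‖) ∧ T (∑ j, b j • v j) = T x := by
  let g := Module.finBasis ℝ (LinearMap.range T)
  choose v hv using fun j => (g j).2
  let c := g.equivFunL.toContinuousLinearMap
  refine ⟨_, v, ‖c‖, fun x => ?_⟩
  let f : LinearMap.range T := ⟨T x, LinearMap.mem_range_self T x⟩
  refine ⟨g.repr f, fun j => ?_, ?_⟩
  · calc |g.repr f j| = ‖c f j‖ := rfl
      _ ≤ ‖c f‖ := norm_le_pi_norm _ j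
      _ ≤ _ := c.le_opNorm f
  · simp only [map_sum, map_smul, hv]
    simpa only [Submodule.coe_sum, Submodule.coe_smul] using congrArg Subtype.val (g.sum_repr f)

lemma MeasureTheory.MemLp.norm_toLp_two {α : Type*} [MeasurableSpace α] {μ : Measure α} {f : α → ℝ}
    (hf : MemLp f 2 μ) : ‖hf.toLp f‖ = √(∫ x, f x ^ 2 ∂μ) := by
  rw [← Real.sqrt_sq (norm_nonneg _), ← real_inner_self_eq_norm_sq, L2.inner_def]
  congr 1
  refine integral_congr_ae ?_
  filter_upwards [hf.coeFn_toLp] with x hx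
  simp [hx, sq]

theorem exists_ae_eq_sum_smul_of_memLp_two {α : Type*} [MeasurableSpace α] {μ : Measure α}
    (V : Submodule ℝ (α → ℝ)) [FiniteDimensional ℝ V] (hV : ∀ u ∈ V, MemLp u 2 μ) :
    ∃ (k : ℕ) (e : Fin k → α → ℝ) (B : ℝ), (∀ j, e j ∈ V) ∧ ∀ u ∈ V, ∃ b : Fin k → ℝ,
      (∀ j, |b j| ≤ B * √(∫ x, u x ^ 2 ∂μ)) ∧ u =ᵐ[μ] ∑ j, b j • e j := by
  let T : V →ₗ[ℝ] Lp ℝ 2 μ :=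
    { toFun := fun u => (hV u u.2).toLp u
      map_add' := fun u v => MemLp.toLp_add (hV u u.2) (hV v v.2)
      map_smul' := fun c u => MemLp.toLp_const_smul c (hV u u.2) }
  obtain ⟨k, v, B, hv⟩ := T.exists_bounded_coeffs
  refine ⟨k, fun j => v j, B, fun j => (v j).2, fun u hu => ?_⟩
  obtain ⟨b, hb, hTb⟩ := hv ⟨u, hu⟩
  refine ⟨b, fun j => (hb j).trans_eq (by rw [← (hV u hu).norm_toLp_two]; rfl), ?_⟩
  have h := (MemLp.toLp_eq_toLp_iff (hV _ (∑ j, b j • v j).2) (hV u hu)).1 hTb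
  simpa only [Submodule.coe_sum, Submodule.coe_smul] using h.symm

theorem exists_integral_negMulLog_sq_le {α : Type*} [MeasurableSpace α] {μ : Measure α}
    (V : Submodule ℝ (α → ℝ)) [FiniteDimensional ℝ V] (hV : ∀ u ∈ V, MemLp u 2 μ)
    (hVlog : ∀ u ∈ V, Integrable (fun x => u x ^ 2 * log (u x ^ 2)) μ) :
    ∃ L, ∀ w ∈ V, ∫ x, w x ^ 2 ∂μ = 1 → ∫ x, negMulLog (w x ^ 2) ∂μ ≤ L := by
  obtain ⟨k, e, B, he, hcoeff⟩ := exists_ae_eq_sum_smul_of_memLp_two V hV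
  have hmaj : ∀ j, Integrable (fun x => negMulLogMajorant (e j x ^ 2)) μ := fun j =>
    integrable_negMulLogMajorant_comp (fun _ => sq_nonneg _) (hV _ (he j)).integrable_sq
      (hVlog _ (he j))
  refine ⟨(k * B ^ 2 + 1) * ∑ j, ∫ x, negMulLogMajorant (e j x ^ 2) ∂μ, fun w hw hw1 => ?_⟩
  obtain ⟨b, hb, hwb⟩ := hcoeff w hw
  rw [hw1, Real.sqrt_one, mul_one] at hb
  have hwlog : Integrable (fun x => negMulLog (w x ^ 2)) μ := by
    simpa only [negMulLog, neg_mul] using (hVlog w hw).fun_neg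
  calc ∫ x, negMulLog (w x ^ 2) ∂μ
      ≤ ∫ x, (k * B ^ 2 + 1) * ∑ j, negMulLogMajorant (e j x ^ 2) ∂μ := by
        refine integral_mono_ae hwlog ((integrable_finsetSum _ fun j _ => hmaj j).const_mul _) ?_
        filter_upwards [hwb] with x hx
        simpa [hx, Finset.sum_apply] using negMulLog_sq_sum_mul_le hb fun j => e j x
    _ = (k * B ^ 2 + 1) * ∑ j, ∫ x, negMulLogMajorant (e j x ^ 2) ∂μ := by
        rw [integral_const_mul, integral_finsetSum _ fun j _ => hmaj j]

section

variable {n : ℕ} {s : ℝ} {V : Submodule ℝ ((Fin n → ℝ) → ℝ)} [FiniteDimensional ℝ V]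

theorem exists_gagliardo_le (hV : ∀ u ∈ V, MemLp u 2 volume ∧ gagliardo n s u < ⊤) :
    ∃ K, 0 ≤ K ∧ ∀ u ∈ V, (gagliardo n s u).toReal ≤ K * ∫ x, u x ^ 2 := by
  obtain ⟨k, e, B, he, hcoeff⟩ := exists_ae_eq_sum_smul_of_memLp_two V fun u hu => (hV u hu).1
  refine ⟨k * B ^ 2 * ∑ j, (gagliardo n s (e j)).toReal, by positivity, fun u hu => ?_⟩
  obtain ⟨b, hb, hub⟩ := hcoeff u hu
  have hν : 0 ≤ ∫ x, u x ^ 2 := integral_nonneg fun _ => sq_nonneg _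
  have hfin : ∑ j, gagliardo n s (e j) ≠ ⊤ := ENNReal.sum_ne_top.2 fun j _ => (hV _ (he j)).2.ne
  calc (gagliardo n s u).toReal
      ≤ (ENNReal.ofReal (k * (B * √(∫ x, u x ^ 2)) ^ 2) * ∑ j, gagliardo n s (e j)).toReal := by
        rw [gagliardo_congr_ae hub]
        refine ENNReal.toReal_mono (ENNReal.mul_ne_top ENNReal.ofReal_ne_top hfin) ?_
        simpa using gagliardo_sum_smul_le
          (fun j => (hV _ (he j)).1.aestronglyMeasurable.aemeasurable) hb
    _ = k * B ^ 2 * (∑ j, (gagliardo n s (e j)).toReal) * ∫ x, u x ^ 2 := by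
        rw [ENNReal.toReal_mul, ENNReal.toReal_ofReal (by positivity),
          ENNReal.toReal_sum fun j _ => (hV _ (he j)).2.ne, mul_pow, Real.sq_sqrt hν]
        ring

theorem exists_Jfun_le (ω : ℝ) (hV : ∀ u ∈ V, MemLp u 2 volume ∧ gagliardo n s u < ⊤)
    (hVlog : ∀ u ∈ V, Integrable (fun x => u x ^ 2 * log (u x ^ 2)) volume) :
    ∃ C, ∀ u ∈ V, 0 < ∫ x, u x ^ 2 →
      Jfun n s ω u ≤ (∫ x, u x ^ 2) / 2 * (C - log (∫ x, u x ^ 2)) := by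
  obtain ⟨K, -, hK⟩ := exists_gagliardo_le hV
  obtain ⟨L, hL⟩ := exists_integral_negMulLog_sq_le V (fun u hu => (hV u hu).1) hVlog
  refine ⟨K + ω + 1 + L, fun u hu hν => ?_⟩
  set ν := ∫ x, u x ^ 2
  set w : (Fin n → ℝ) → ℝ := (√ν)⁻¹ • u
  have hwV : w ∈ V := V.smul_mem _ hu
  have hsq : ∀ x, u x ^ 2 = ν * w x ^ 2 := fun x => by
    simp only [w, Pi.smul_apply, smul_eq_mul, mul_pow, inv_pow, Real.sq_sqrt hν.le]
    field_simp
  have hw1 : ∫ x, w x ^ 2 = 1 := by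
    simp only [w, Pi.smul_apply, smul_eq_mul, mul_pow, inv_pow, Real.sq_sqrt hν.le]
    rw [integral_const_mul, inv_mul_cancel₀ hν.ne']
  have hwlog : Integrable (fun x => negMulLog (w x ^ 2)) := by
    simpa only [negMulLog, neg_mul] using (hVlog w hwV).fun_neg
  have hent : ∫ x, negMulLog (u x ^ 2) ≤ negMulLog ν + ν * L := by
    simp_rw [hsq]
    rw [integral_negMulLog_const_mul (hV w hwV).1.integrable_sq hwlog, hw1, mul_one]
    gcongr
    exact hL w hwV hw1
  have hlog : ∫ x, u x ^ 2 * log (u x ^ 2) = -∫ x, negMulLog (u x ^ 2) := by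
    rw [← integral_neg]
    simp [negMulLog]
  rw [Jfun, hlog]
  rw [negMulLog] at hent
  linarith [hK u hu]

end

lemma exists_forall_ge_mul_sub_log_le (C M : ℝ) :
    ∃ D > 0, ∀ ν ≥ D, ν * (C - log ν) ≤ M := by
  refine ⟨exp (C + 1) + |M|, by positivity, fun ν hν => ?_⟩
  have hν0 : 0 ≤ ν := by linarith [exp_pos (C + 1), abs_nonneg M]
  have hlog : C + 1 ≤ log ν := by
    rw [le_log_iff_exp_le (by linarith [exp_pos (C + 1), abs_nonneg M])]
    linarith [abs_nonneg M]
  have := mul_le_mul_of_nonneg_left (show C - log ν ≤ -1 by linarith) hν0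
  linarith [neg_abs_le M, exp_pos (C + 1)]

theorem stmt_13_general (n : ℕ) (s ω : ℝ)
    (V : Submodule ℝ ((Fin n → ℝ) → ℝ)) [FiniteDimensional ℝ V]
    (hVHs : ∀ u ∈ V, MemLp u 2 volume ∧ gagliardo n s u < ⊤)
    (hVlog : ∀ u ∈ V, Integrable (fun x => (u x) ^ 2 * Real.log ((u x) ^ 2)) volume) :
    (∀ M : ℝ, ∃ R > 0, ∀ u ∈ V, R ≤ Real.sqrt (hsNormSq n s u) → Jfun n s ω u ≤ M) ∧
    ∃ R > 0, ∀ u ∈ V, R ≤ Real.sqrt (hsNormSq n s u) → Jfun n s ω u ≤ 0 := by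
  obtain ⟨K, hK0, hK⟩ := exists_gagliardo_le hVHs
  obtain ⟨C, hC⟩ := exists_Jfun_le ω hVHs hVlog
  have hJ : ∀ M : ℝ, ∃ R > 0, ∀ u ∈ V, R ≤ √(hsNormSq n s u) → Jfun n s ω u ≤ M := by
    intro M
    obtain ⟨D, hD, hDM⟩ := exists_forall_ge_mul_sub_log_le C (2 * M)
    refine ⟨√((1 + K) * D), by positivity, fun u hu hR => ?_⟩
    have hν : D ≤ ∫ x, u x ^ 2 := by
      have hHs : hsNormSq n s u ≤ (1 + K) * ∫ x, u x ^ 2 := by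
        rw [hsNormSq]
        linarith [hK u hu]
      have := Real.sqrt_le_sqrt_iff (by positivity) |>.1 (hR.trans (Real.sqrt_le_sqrt hHs))
      exact le_of_mul_le_mul_left this (by positivity)
    linarith [hDM _ hν, hC u hu (hD.trans_le hν)]
  exact ⟨hJ, hJ 0⟩

theorem stmt_13 (n : ℕ) (s ω : ℝ) (hs : 0 < s) (hs1 : s < 1) (hn : 2 * s < n)
    (V : Submodule ℝ ((Fin n → ℝ) → ℝ)) [FiniteDimensional ℝ V]
    (hVmeas : ∀ u ∈ V, Measurable u)
    (hVrad : ∀ u ∈ V, ∀ x y : Fin n → ℝ, ‖x‖ = ‖y‖ → u x = u y)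
    (hVHs : ∀ u ∈ V, MemLp u 2 volume ∧ gagliardo n s u < ⊤)
    (hVlog : ∀ u ∈ V, Integrable (fun x => (u x) ^ 2 * Real.log ((u x) ^ 2)) volume) :
    (∀ M : ℝ, ∃ R > 0, ∀ u ∈ V, R ≤ Real.sqrt (hsNormSq n s u) → Jfun n s ω u ≤ M) ∧
    ∃ R > 0, ∀ u ∈ V, R ≤ Real.sqrt (hsNormSq n s u) → Jfun n s ω u ≤ 0 :=
  stmt_13_general n s ω V hVHs hVlog
end

section
/- If n < 10s, n ≥ 6s, and 0 < δ < (-(n-4s) + √(4s(n-s)))/(n-2s), then p₂ > n/(2s), where q₀ = 2n/(n-2s), p₁ = q₀/(1+δ), 1/q₁ = 1/p₁ - 2s/n, and p₂ = q₁/(1+δ). -/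
theorem stmt_18 (n s δ : ℝ) (hs : 0 < s) (hn : 2 * s < n)
    (hn6 : 6 * s ≤ n) (hn10 : n < 10 * s)
    (hδ0 : 0 < δ)
    (hδ : δ < (-(n - 4 * s) + Real.sqrt (4 * s * (n - s))) / (n - 2 * s))
    (q₀ p₁ q₁ p₂ : ℝ)
    (hq0 : q₀ = 2 * n / (n - 2 * s))
    (hp1 : p₁ = q₀ / (1 + δ))
    (hq1pos : 0 < q₁) (hq1 : 1 / q₁ = 1 / p₁ - 2 * s / n)
    (hp2 : p₂ = q₁ / (1 + δ)) :
    n / (2 * s) < p₂ := by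
  have hns : 0 < n - 2 * s := by linarith
  have hn0 : 0 < n := by linarith
  have ht : 0 < 1 + δ := by linarith
  set r := Real.sqrt (4 * s * (n - s)) with hr
  have hr0 : 0 ≤ r := Real.sqrt_nonneg _
  have hr2 : r ^ 2 = 4 * s * (n - s) := Real.sq_sqrt (by nlinarith)
  have hA : δ * (n - 2 * s) < -(n - 4 * s) + r := (lt_div_iff₀ hns).mp hδ
  -- key inequality
  have key : (1 + δ) * ((1 + δ) * (n - 2 * s) - 4 * s) < 4 * s := by
    rcases le_or_gt 0 ((1 + δ) * (n - 2 * s) - 2 * s) with h | h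
    · have hA2 : ((1 + δ) * (n - 2 * s) - 2 * s) ^ 2 < r ^ 2 := by nlinarith
      nlinarith [sq_nonneg ((1 + δ) * (n - 2 * s) - 2 * s)]
    · nlinarith
  have hp1v : 1 / p₁ = (1 + δ) * (n - 2 * s) / (2 * n) := by
    rw [hp1, hq0]
    field_simp
  have hq1v : 1 / q₁ = ((1 + δ) * (n - 2 * s) - 4 * s) / (2 * n) := by
    rw [hq1, hp1v]
    field_simp
    ring
  have hD : 0 < (1 + δ) * (n - 2 * s) - 4 * s := by
    by_contra hc
    push_neg at hc
    have h1 : 0 < 1 / q₁ := by positivity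
    rw [hq1v] at h1
    have := (div_pos_iff.mp h1)
    rcases this with ⟨h2, _⟩ | ⟨_, h3⟩ <;> linarith
  have hq1e : q₁ = 2 * n / ((1 + δ) * (n - 2 * s) - 4 * s) := by
    have h1 : q₁ = (1 / q₁)⁻¹ := by
      field_simp
    rw [h1, hq1v, inv_div]
  rw [hp2, hq1e, div_div]
  rw [div_lt_div_iff₀ (by positivity) (by positivity)]
  nlinarith
end

section
/- Let u_k → u a.e. in ℝⁿ, with sup_k ‖u_k‖_{H^s} < ∞ and u_k → u in L^p(ℝⁿ) for all 2 < p < 2n/(n-2s). Then limsup_k ∫ u_k² log u_k² ≤ ∫ u² log u² (in ℝ ∪ {-∞}): splitting G(t) = t² log t² as G⁺ - G⁻ where G⁺(t) ≤ C|t|^q for a fixed q ∈ (2, 2n/(n-2s)), one has ∫ G⁺(u_k) → ∫ G⁺(u) by L^q-convergence and ∫ G⁻(u) ≤ liminf_k ∫ G⁻(u_k) by Fatou's lemma. -/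
open MeasureTheory
open scoped ENNReal

noncomputable def G (t : ℝ) : ℝ := if t = 0 then 0 else t ^ 2 * Real.log (t ^ 2)

/-- `∫ u² log u²` understood as `∫ G⁺(u) - ∫ G⁻(u) ∈ ℝ ∪ {-∞}`
(the positive part being assumed finite). -/
noncomputable def logEnergy (n : ℕ) (u : (Fin n → ℝ) → ℝ) : EReal :=
  ((∫ x, max (G (u x)) 0 : ℝ) : EReal) -
    ((∫⁻ x, ENNReal.ofReal (max (-(G (u x))) 0) : ℝ≥0∞) : EReal)

/-!
Fix `q` with `2 < q < 2n/(n-2s)`. Since `log x ≤ x^ε/ε`, one has `G t ≤ C |t|^q` with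
`C = 2/(q-2)`, so `C |t|^q - G t` is a nonnegative continuous function of `t`, and Fatou's lemma
gives `∫ (C|v|^q - G v) ≤ liminf ∫ (C|u_k|^q - G u_k)`. On the other hand `∫ C|u_k|^q → ∫ C|v|^q`
by `L^q`-convergence. Writing `∫ G(u) = ∫ C|u|^q - ∫ (C|u|^q - G u)` in `ℝ ∪ {-∞}`, the limsup
inequality follows.
-/

open Filter Topology

lemma EReal.coe_ennreal_sub_eq_of_add_eq {a b c d : ℝ≥0∞} (h : a + b = c + d) (hb : b ≠ ∞)
    (hc : c ≠ ∞) : (b : EReal) - d = c - a := by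
  rcases eq_or_ne d ∞ with rfl | hd
  · obtain rfl : a = ∞ := by simpa [hb] using h
    simp
  have ha : a ≠ ∞ := fun ha => by
    rw [ha, top_add] at h
    exact ENNReal.add_ne_top.2 ⟨hc, hd⟩ h.symm
  have hreal := congrArg ENNReal.toReal h
  rw [ENNReal.toReal_add ha hb, ENNReal.toReal_add hc hd] at hreal
  rw [← EReal.coe_ennreal_toReal ha, ← EReal.coe_ennreal_toReal hb,
    ← EReal.coe_ennreal_toReal hc, ← EReal.coe_ennreal_toReal hd, ← EReal.coe_sub,
    ← EReal.coe_sub]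
  congr 1
  linarith

lemma EReal.limsup_coe_ennreal_sub_le {a b : ℕ → ℝ≥0∞} {x y : ℝ≥0∞} (hx : x ≠ ∞)
    (ha : Tendsto a atTop (𝓝 x)) (hb : y ≤ liminf b atTop) :
    limsup (fun k => (a k : EReal) - b k) atTop ≤ (x : EReal) - y := by
  have ha' : Tendsto (fun k => (a k : EReal)) atTop (𝓝 x) :=
    (continuous_coe_ennreal_ereal.tendsto x).comp ha
  have hb' : (y : EReal) ≤ liminf (fun k => (b k : EReal)) atTop := by
    have hmono : Monotone ((↑) : ℝ≥0∞ → EReal) := fun _ _ h =>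
      EReal.coe_ennreal_le_coe_ennreal_iff.2 h
    rw [← Function.comp_def, ← hmono.map_liminf_of_continuousAt b
      continuous_coe_ennreal_ereal.continuousAt]
    exact EReal.coe_ennreal_le_coe_ennreal_iff.2 hb
  have hx' : (x : EReal) ≠ ⊤ := by simpa using hx
  calc limsup (fun k => (a k : EReal) - b k) atTop
      ≤ limsup (fun k => (a k : EReal)) atTop + limsup (fun k => -(b k : EReal)) atTop :=
        EReal.limsup_add_le (Or.inl (by simp [ha'.limsup_eq])) (Or.inl (ha'.limsup_eq ▸ hx'))
    _ = x + -liminf (fun k => (b k : EReal)) atTop := by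
        rw [ha'.limsup_eq, ← EReal.limsup_neg]; rfl
    _ ≤ x - y := add_le_add_right (EReal.neg_le_neg_iff.2 hb') _

lemma ENNReal.ofReal_sub_add_ofReal_max_zero {x y : ℝ} (hxy : x ≤ y) (hy : 0 ≤ y) :
    ENNReal.ofReal (y - x) + ENNReal.ofReal (max x 0) =
      ENNReal.ofReal y + ENNReal.ofReal (max (-x) 0) := by
  rcases le_total 0 x with hx | hx
  · rw [max_eq_left hx, max_eq_right (neg_nonpos.2 hx), ENNReal.ofReal_zero, add_zero,
      ← ENNReal.ofReal_add (sub_nonneg.2 hxy) hx, sub_add_cancel]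
  · rw [max_eq_right hx, max_eq_left (neg_nonneg.2 hx), ENNReal.ofReal_zero, add_zero,
      ← ENNReal.ofReal_add hy (neg_nonneg.2 hx), sub_eq_add_neg]

lemma G_eq (t : ℝ) : G t = t ^ 2 * Real.log (t ^ 2) := by
  unfold G; split_ifs with h <;> simp [h]

lemma continuous_G : Continuous G := by
  rw [funext G_eq]
  exact Real.continuous_mul_log.comp (continuous_pow 2)

lemma G_le_rpow {q : ℝ} (hq : 2 < q) (t : ℝ) : G t ≤ 2 / (q - 2) * |t| ^ q := by
  have hq2 : 0 < q - 2 := by linarith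
  have hlog : Real.log |t| ≤ |t| ^ (q - 2) / (q - 2) := Real.log_le_rpow_div (abs_nonneg t) hq2
  have hpow : |t| ^ q = |t| ^ 2 * |t| ^ (q - 2) := by
    rw [← Real.rpow_natCast, ← Real.rpow_add' (abs_nonneg t) (by linarith)]
    norm_num
  calc G t = 2 * |t| ^ 2 * Real.log |t| := by
        rw [G_eq, ← sq_abs, Real.log_pow]; push_cast; ring
    _ ≤ 2 * |t| ^ 2 * (|t| ^ (q - 2) / (q - 2)) := by gcongr
    _ = 2 / (q - 2) * |t| ^ q := by rw [hpow]; ring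

section

variable {α : Type*} [MeasurableSpace α] {μ : Measure α}

lemma lintegral_comp_le_liminf_of_ae_tendsto {β : Type*} [TopologicalSpace β]
    [MeasurableSpace β] [OpensMeasurableSpace β] {Φ : β → ℝ≥0∞} (hΦ : Continuous Φ)
    {u : ℕ → α → β} {v : α → β} (hu : ∀ k, AEMeasurable (u k) μ)
    (hae : ∀ᵐ x ∂μ, Tendsto (fun k => u k x) atTop (𝓝 (v x))) :
    ∫⁻ x, Φ (v x) ∂μ ≤ liminf (fun k => ∫⁻ x, Φ (u k x) ∂μ) atTop :=
  calc ∫⁻ x, Φ (v x) ∂μ = ∫⁻ x, liminf (fun k => Φ (u k x)) atTop ∂μ :=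
        lintegral_congr_ae (hae.mono fun _ hx => ((hΦ.tendsto _).comp hx).liminf_eq.symm)
    _ ≤ liminf (fun k => ∫⁻ x, Φ (u k x) ∂μ) atTop :=
        lintegral_liminf_le' fun k => hΦ.measurable.comp_aemeasurable (hu k)

lemma tendsto_eLpNorm_of_tendsto_eLpNorm_sub {E : Type*} [NormedAddCommGroup E] {p : ℝ≥0∞}
    (hp : 1 ≤ p) {f : ℕ → α → E} {g : α → E} (hf : ∀ k, AEStronglyMeasurable (f k) μ)
    (hg : MemLp g p μ) (h : Tendsto (fun k => eLpNorm (f k - g) p μ) atTop (𝓝 0)) :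
    Tendsto (fun k => eLpNorm (f k) p μ) atTop (𝓝 (eLpNorm g p μ)) := by
  have upper (k : ℕ) : eLpNorm (f k) p μ ≤ eLpNorm (f k - g) p μ + eLpNorm g p μ := by
    simpa using eLpNorm_add_le ((hf k).sub hg.1) hg.1 hp
  have lower (k : ℕ) : eLpNorm g p μ - eLpNorm (f k - g) p μ ≤ eLpNorm (f k) p μ := by
    rw [tsub_le_iff_right]
    simpa using eLpNorm_sub_le (hf k) ((hf k).sub hg.1) hp
  refine tendsto_of_tendsto_of_tendsto_of_le_of_le ?_ ?_ lower upper
  · simpa using ENNReal.Tendsto.sub tendsto_const_nhds h (Or.inl hg.eLpNorm_ne_top)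
  · simpa using h.add tendsto_const_nhds

lemma lintegral_ofReal_mul_rpow_abs {q c : ℝ} (hq : 0 < q) (hc : 0 ≤ c) (u : α → ℝ) :
    ∫⁻ x, ENNReal.ofReal (c * |u x| ^ q) ∂μ =
      ENNReal.ofReal c * eLpNorm u (ENNReal.ofReal q) μ ^ q := by
  have hpt (x : α) : ENNReal.ofReal (c * |u x| ^ q) = ENNReal.ofReal c * ‖u x‖ₑ ^ q := by
    rw [ENNReal.ofReal_mul hc, Real.enorm_eq_ofReal_abs,
      ENNReal.ofReal_rpow_of_nonneg (abs_nonneg _) hq.le]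
  simp_rw [hpt]
  rw [lintegral_const_mul' _ _ ENNReal.ofReal_ne_top, lintegral_rpow_enorm_eq_rpow_eLpNorm' hq,
    eLpNorm_eq_eLpNorm' (by simpa using hq) ENNReal.ofReal_ne_top, ENNReal.toReal_ofReal hq.le]

lemma MeasureTheory.MemLp.lintegral_ofReal_mul_rpow_abs_ne_top {q c : ℝ} (hq : 0 < q)
    (hc : 0 ≤ c) {u : α → ℝ} (hu : MemLp u (ENNReal.ofReal q) μ) :
    ∫⁻ x, ENNReal.ofReal (c * |u x| ^ q) ∂μ ≠ ∞ := by
  rw [lintegral_ofReal_mul_rpow_abs hq hc]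
  exact ENNReal.mul_ne_top ENNReal.ofReal_ne_top
    (ENNReal.rpow_ne_top_of_nonneg hq.le hu.eLpNorm_ne_top)

lemma tendsto_lintegral_ofReal_mul_rpow_abs {q c : ℝ} (hq : 1 ≤ q) (hc : 0 ≤ c)
    {u : ℕ → α → ℝ} {v : α → ℝ} (hu : ∀ k, AEStronglyMeasurable (u k) μ)
    (hv : MemLp v (ENNReal.ofReal q) μ)
    (h : Tendsto (fun k => eLpNorm (u k - v) (ENNReal.ofReal q) μ) atTop (𝓝 0)) :
    Tendsto (fun k => ∫⁻ x, ENNReal.ofReal (c * |u k x| ^ q) ∂μ) atTop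
      (𝓝 (∫⁻ x, ENNReal.ofReal (c * |v x| ^ q) ∂μ)) := by
  simp_rw [lintegral_ofReal_mul_rpow_abs (zero_lt_one.trans_le hq) hc]
  have hq' : 1 ≤ ENNReal.ofReal q := by simpa using ENNReal.ofReal_le_ofReal hq
  exact ENNReal.Tendsto.const_mul ((ENNReal.continuous_rpow_const.tendsto _).comp
    (tendsto_eLpNorm_of_tendsto_eLpNorm_sub hq' hu hv h)) (Or.inr ENNReal.ofReal_ne_top)

end

lemma logEnergy_eq_sub {n : ℕ} {q : ℝ} (hq : 2 < q) {u : (Fin n → ℝ) → ℝ}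
    (hu : MemLp u (ENNReal.ofReal q)) :
    logEnergy n u = ((∫⁻ x, ENNReal.ofReal (2 / (q - 2) * |u x| ^ q) : ℝ≥0∞) : EReal) -
      ((∫⁻ x, ENNReal.ofReal (2 / (q - 2) * |u x| ^ q - G (u x)) : ℝ≥0∞) : EReal) := by
  have hC : 0 ≤ 2 / (q - 2) := div_nonneg zero_le_two (by linarith)
  have hu' : AEMeasurable u := hu.aemeasurable
  have hGu : AEMeasurable (fun x => G (u x)) := continuous_G.measurable.comp_aemeasurable hu'
  have hsplit : (∫⁻ x, ENNReal.ofReal (2 / (q - 2) * |u x| ^ q - G (u x))) +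
        ∫⁻ x, ENNReal.ofReal (max (G (u x)) 0) =
      (∫⁻ x, ENNReal.ofReal (2 / (q - 2) * |u x| ^ q)) +
        ∫⁻ x, ENNReal.ofReal (max (-G (u x)) 0) := by
    rw [← lintegral_add_left' (by fun_prop), ← lintegral_add_left' (by fun_prop)]
    exact lintegral_congr fun x =>
      ENNReal.ofReal_sub_add_ofReal_max_zero (G_le_rpow hq _) (by positivity)
  have hfin := hu.lintegral_ofReal_mul_rpow_abs_ne_top (by linarith) hC
  have hpos_fin : ∫⁻ x, ENNReal.ofReal (max (G (u x)) 0) ≠ ∞ :=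
    ne_top_of_le_ne_top hfin <| lintegral_mono fun x =>
      ENNReal.ofReal_le_ofReal (max_le (G_le_rpow hq _) (by positivity))
  rw [logEnergy, integral_eq_lintegral_of_nonneg_ae (f := fun x => max (G (u x)) 0)
    (ae_of_all _ fun _ => le_max_right _ _) (hGu.max aemeasurable_const).aestronglyMeasurable,
    EReal.coe_ennreal_toReal hpos_fin]
  exact EReal.coe_ennreal_sub_eq_of_add_eq hsplit hpos_fin hfin

theorem stmt_19_general (n : ℕ) (s : ℝ) (hs : 0 < s) (hn : 2 * s < n)
    (u : ℕ → (Fin n → ℝ) → ℝ) (v : (Fin n → ℝ) → ℝ)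
    (hae : ∀ᵐ x : Fin n → ℝ, Filter.Tendsto (fun k => u k x) Filter.atTop (nhds (v x)))
    (hmemp : ∀ p : ℝ, 2 < p → p < 2 * n / (n - 2 * s) →
      MemLp v (ENNReal.ofReal p) volume ∧ ∀ k, MemLp (u k) (ENNReal.ofReal p) volume)
    (hLp : ∀ p : ℝ, 2 < p → p < 2 * n / (n - 2 * s) →
      Filter.Tendsto (fun k => eLpNorm (u k - v) (ENNReal.ofReal p) volume)
        Filter.atTop (nhds 0)) :
    Filter.limsup (fun k => logEnergy n (u k)) Filter.atTop ≤ logEnergy n v := by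
  have hcrit : 2 < 2 * n / (n - 2 * s) := by
    rw [lt_div_iff₀ (by linarith)]; linarith
  obtain ⟨q, hq, hqcrit⟩ := exists_between hcrit
  obtain ⟨hv, hu⟩ := hmemp q hq hqcrit
  have hC : 0 ≤ 2 / (q - 2) := div_nonneg zero_le_two (by linarith)
  have hΦ : Continuous fun t => ENNReal.ofReal (2 / (q - 2) * |t| ^ q - G t) :=
    ENNReal.continuous_ofReal.comp ((continuous_const.mul
      (continuous_abs.rpow_const fun _ => Or.inr (by linarith))).sub continuous_G)
  simp only [logEnergy_eq_sub hq (hu _), logEnergy_eq_sub hq hv]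
  exact EReal.limsup_coe_ennreal_sub_le
    (hv.lintegral_ofReal_mul_rpow_abs_ne_top (by linarith) hC)
    (tendsto_lintegral_ofReal_mul_rpow_abs (by linarith) hC (fun k => (hu k).1) hv
      (hLp q hq hqcrit))
    (lintegral_comp_le_liminf_of_ae_tendsto hΦ (fun k => (hu k).aemeasurable) hae)

theorem stmt_19 (n : ℕ) (s : ℝ) (hs : 0 < s) (hs1 : s < 1) (hn : 2 * s < n)
    (u : ℕ → (Fin n → ℝ) → ℝ) (v : (Fin n → ℝ) → ℝ)
    (humeas : ∀ k, Measurable (u k)) (hvmeas : Measurable v)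
    (hae : ∀ᵐ x : Fin n → ℝ, Filter.Tendsto (fun k => u k x) Filter.atTop (nhds (v x)))
    (M : ℝ≥0∞) (hM : M ≠ ⊤)
    (hbound : ∀ k, eLpNorm (u k) 2 volume ≤ M ∧ gagliardo n s (u k) ≤ M)
    (hmemp : ∀ p : ℝ, 2 < p → p < 2 * n / (n - 2 * s) →
      MemLp v (ENNReal.ofReal p) volume ∧ ∀ k, MemLp (u k) (ENNReal.ofReal p) volume)
    (hLp : ∀ p : ℝ, 2 < p → p < 2 * n / (n - 2 * s) →
      Filter.Tendsto (fun k => eLpNorm (u k - v) (ENNReal.ofReal p) volume)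
        Filter.atTop (nhds 0)) :
    Filter.limsup (fun k => logEnergy n (u k)) Filter.atTop ≤ logEnergy n v :=
  stmt_19_general n s hs hn u v hae hmemp hLp
end
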